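/- Let D be a finite set of binary strings of length N, and let f_0, f_1, …, f_k : D → E be functions with Gram matrices F_0, F_1, …, F_k. Suppose that for each i ∈ {1,…,k} there are a real C_i ≥ 0 and a feasible solution for γ(F_{i−1} − F_i) whose cost function is bounded above by C_i at every x ∈ D. Then there is a feasible solution for γ(F_0 − F_k) whose cost function is bounded above by ∑_{i=1}^k C_i at every x ∈ D. -/

import Mathlib

open Finset

/-- A feasible solution for the filtered γ₂-norm SDP `γ(A)` on domain `D ⊆ {0,1}^N`,
with cost function `c`. -/
def GammaFeasible {N : ℕ} (D : Finset (Fin N → Bool))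
    (A : (Fin N → Bool) → (Fin N → Bool) → ℝ)
    (c : (Fin N → Bool) → ℝ) : Prop :=
  ∃ (d : ℕ) (u v : (Fin N → Bool) → Fin N → EuclideanSpace ℂ (Fin d)),
    (∀ x ∈ D, ∀ y ∈ D,
      ∑ j ∈ Finset.univ.filter (fun j => x j ≠ y j),
        (inner ℂ (u x j) (v y j) : ℂ) = (A x y : ℂ)) ∧
    (∀ x ∈ D, c x = max (∑ j, ‖u x j‖ ^ 2) (∑ j, ‖v x j‖ ^ 2))

/-- The Gram matrix of a function `f`. -/
def Gram {N : ℕ} {E : Type*} [DecidableEq E] (f : (Fin N → Bool) → E) :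
    (Fin N → Bool) → (Fin N → Bool) → ℝ :=
  fun x y => if f x = f y then 1 else 0

/-!
Feasible solutions for `γ` add: concatenating the vectors of a solution for `A` with those of a
solution for `B` gives a solution for `A + B` whose cost is at most the sum of the two costs.
Since `F₀ - F_k` telescopes as `∑ i, (F_{i-1} - F_i)`, summing the given solutions proves the
theorem.
-/

theorem Fin.sum_univ_castSucc_sub_succ {M : Type*} [AddCommGroup M] :
    ∀ {n : ℕ} (g : Fin (n + 1) → M), ∑ i : Fin n, (g i.castSucc - g i.succ) = g 0 - g (last n)
  | 0, _ => by simp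
  | n + 1, g => by
    rw [Fin.sum_univ_castSucc]
    simp only [Fin.succ_castSucc]
    rw [Fin.sum_univ_castSucc_sub_succ fun i => g i.castSucc, Fin.castSucc_zero,
      Fin.succ_last, sub_add_sub_cancel]

def euclideanAppend {d₁ d₂ : ℕ} (a : EuclideanSpace ℂ (Fin d₁)) (b : EuclideanSpace ℂ (Fin d₂)) :
    EuclideanSpace ℂ (Fin (d₁ + d₂)) :=
  WithLp.toLp 2 (Fin.append a.ofLp b.ofLp)

theorem inner_euclideanAppend {d₁ d₂ : ℕ} (a a' : EuclideanSpace ℂ (Fin d₁))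
    (b b' : EuclideanSpace ℂ (Fin d₂)) :
    inner ℂ (euclideanAppend a b) (euclideanAppend a' b') = inner ℂ a a' + inner ℂ b b' := by
  simp [euclideanAppend, PiLp.inner_apply, Fin.sum_univ_add]

theorem norm_sq_euclideanAppend {d₁ d₂ : ℕ} (a : EuclideanSpace ℂ (Fin d₁))
    (b : EuclideanSpace ℂ (Fin d₂)) :
    ‖euclideanAppend a b‖ ^ 2 = ‖a‖ ^ 2 + ‖b‖ ^ 2 := by
  simp [euclideanAppend, EuclideanSpace.norm_sq_eq, Fin.sum_univ_add]

section GammaBounded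

variable {N : ℕ}

/-- `γ(A) ≤ b` pointwise on `D`. -/
def GammaBounded (D : Finset (Fin N → Bool)) (A : (Fin N → Bool) → (Fin N → Bool) → ℝ)
    (b : (Fin N → Bool) → ℝ) : Prop :=
  ∃ c, GammaFeasible D A c ∧ ∀ x ∈ D, c x ≤ b x

variable {D : Finset (Fin N → Bool)}

theorem gammaBounded_zero : GammaBounded D 0 0 :=
  ⟨0, ⟨0, 0, 0, fun _ _ _ _ => by simp, fun _ _ => by simp⟩, fun _ _ => le_rfl⟩

theorem GammaBounded.add {A B : (Fin N → Bool) → (Fin N → Bool) → ℝ} {a b : (Fin N → Bool) → ℝ}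
    (hA : GammaBounded D A a) (hB : GammaBounded D B b) : GammaBounded D (A + B) (a + b) := by
  obtain ⟨cA, ⟨d₁, u, v, hu, hcA⟩, hcA_le⟩ := hA
  obtain ⟨cB, ⟨d₂, u', v', hu', hcB⟩, hcB_le⟩ := hB
  let U x j := euclideanAppend (u x j) (u' x j)
  let V x j := euclideanAppend (v x j) (v' x j)
  refine ⟨fun x => max (∑ j, ‖U x j‖ ^ 2) (∑ j, ‖V x j‖ ^ 2),
    ⟨d₁ + d₂, U, V, fun x hx y hy => ?_, fun _ _ => rfl⟩, fun x hx => ?_⟩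
  · simp only [U, V, inner_euclideanAppend, sum_add_distrib, hu x hx y hy, hu' x hx y hy,
      Pi.add_apply, Complex.ofReal_add]
  · have hmax : max (∑ j, ‖U x j‖ ^ 2) (∑ j, ‖V x j‖ ^ 2) ≤ cA x + cB x := by
      simp only [U, V, norm_sq_euclideanAppend, sum_add_distrib, hcA x hx, hcB x hx]
      exact max_le (add_le_add (le_max_left _ _) (le_max_left _ _))
        (add_le_add (le_max_right _ _) (le_max_right _ _))
    exact hmax.trans (add_le_add (hcA_le x hx) (hcB_le x hx))

theorem GammaBounded.sum {ι : Type*} (s : Finset ι) {A : ι → (Fin N → Bool) → (Fin N → Bool) → ℝ}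
    {b : ι → (Fin N → Bool) → ℝ} (h : ∀ i ∈ s, GammaBounded D (A i) (b i)) :
    GammaBounded D (∑ i ∈ s, A i) (∑ i ∈ s, b i) := by
  classical
  induction s using Finset.induction_on with
  | empty => exact gammaBounded_zero
  | insert i s hi ih =>
    rw [sum_insert hi, sum_insert hi]
    exact (h i (mem_insert_self i s)).add (ih fun j hj => h j (mem_insert_of_mem hj))

end GammaBounded

theorem gamma_composition_worst_case_general {N k : ℕ} {E : Type*} [DecidableEq E]
    (D : Finset (Fin N → Bool))
    (f : Fin (k + 1) → (Fin N → Bool) → E)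
    (C : Fin k → ℝ)
    (h : ∀ i : Fin k, ∃ c : (Fin N → Bool) → ℝ,
      GammaFeasible D (fun x y => Gram (f i.castSucc) x y - Gram (f i.succ) x y) c ∧
      ∀ x ∈ D, c x ≤ C i) :
    ∃ cc : (Fin N → Bool) → ℝ,
      GammaFeasible D (fun x y => Gram (f 0) x y - Gram (f (Fin.last k)) x y) cc ∧
      ∀ x ∈ D, cc x ≤ ∑ i, C i := by
  have hsum : GammaBounded D (∑ i : Fin k, (Gram (f i.castSucc) - Gram (f i.succ)))
      (∑ i, fun _ => C i) :=
    GammaBounded.sum univ fun i _ => h i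
  rw [Fin.sum_univ_castSucc_sub_succ fun i => Gram (f i), Finset.sum_fn] at hsum
  exact hsum

theorem gamma_composition_worst_case {N k : ℕ} {E : Type*} [DecidableEq E]
    (D : Finset (Fin N → Bool))
    (f : Fin (k + 1) → (Fin N → Bool) → E)
    (C : Fin k → ℝ) (hC : ∀ i, 0 ≤ C i)
    (h : ∀ i : Fin k, ∃ c : (Fin N → Bool) → ℝ,
      GammaFeasible D (fun x y => Gram (f i.castSucc) x y - Gram (f i.succ) x y) c ∧
      ∀ x ∈ D, c x ≤ C i) :
    ∃ cc : (Fin N → Bool) → ℝ,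
      GammaFeasible D (fun x y => Gram (f 0) x y - Gram (f (Fin.last k)) x y) cc ∧
      ∀ x ∈ D, cc x ≤ ∑ i, C i :=
  gamma_composition_worst_case_general D f C h
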